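/- Let w, s, t be nonnegative forms on a complex vector space X such that s and t are w-quasi-units (s[x] = sup_{n∈ℕ} inf_{y∈X} (w[x−y] + n·s[y]) and t[x] = sup_{n∈ℕ} inf_{y∈X} (w[x−y] + n·t[y]) for all x). Let p be a nonnegative form with p[x] = sup_{n∈ℕ} inf_{y∈X} (w[x−y] + n·(s[y] + t[y])) for all x ∈ X (i.e. p = D_{s+t} w). Then p is a w-quasi-unit, s ≤ p, t ≤ p, and every w-quasi-unit u with s ≤ u and t ≤ u satisfies p ≤ u; that is, p is the least upper bound of s and t within the set of w-quasi-units. -/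
import Mathlib


open scoped ComplexOrder

/-- A sesquilinear form (linear in the first, conjugate-linear in the second variable)
`t : X →ₗ[ℂ] X →ₗ⋆[ℂ] ℂ` is nonnegative if `t(x,x) ≥ 0` for all `x`. -/
def IsNNForm {X : Type*} [AddCommGroup X] [Module ℂ X]
    (t : X →ₗ[ℂ] X →ₗ⋆[ℂ] ℂ) : Prop :=
  ∀ x : X, 0 ≤ t x x

/-- The quadratic form of a form: `t[x] = t(x,x)`, viewed as a real number. -/
def FQ {X : Type*} [AddCommGroup X] [Module ℂ X]
    (t : X →ₗ[ℂ] X →ₗ⋆[ℂ] ℂ) (x : X) : ℝ :=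
  (t x x).re

/-- The order on forms: `t ≤ w` iff `t[x] ≤ w[x]` for all `x`. -/
def FLe {X : Type*} [AddCommGroup X] [Module ℂ X]
    (t w : X →ₗ[ℂ] X →ₗ⋆[ℂ] ℂ) : Prop :=
  ∀ x : X, FQ t x ≤ FQ w x

/-- `t` and `w` are singular: the only nonnegative form below both is the zero form. -/
def SingForm {X : Type*} [AddCommGroup X] [Module ℂ X]
    (t w : X →ₗ[ℂ] X →ₗ⋆[ℂ] ℂ) : Prop :=
  ∀ s : X →ₗ[ℂ] X →ₗ⋆[ℂ] ℂ, IsNNForm s → FLe s t → FLe s w → s = 0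

section auxlem
variable {X : Type*} [AddCommGroup X] [Module ℂ X] (a : X →ₗ[ℂ] X →ₗ⋆[ℂ] ℂ)

lemma FQ_zero' : FQ a 0 = 0 := by simp [FQ]

lemma FQ_nonneg' (ha : IsNNForm a) (x : X) : 0 ≤ FQ a x := by
  simpa [FQ] using (Complex.le_def.mp (ha x)).1

lemma FQ_parallelogram' (A B : X) :
    FQ a (A + B) + FQ a (A - B) = 2 * FQ a A + 2 * FQ a B := by
  have h : a (A+B) (A+B) + a (A-B) (A-B) = 2 * a A A + 2 * a B B := by
    simp [map_add, map_sub, LinearMap.add_apply, LinearMap.sub_apply]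
    ring
  have := congrArg Complex.re h
  simpa [FQ, Complex.add_re, Complex.mul_re] using this

lemma FQ_half' (y : X) : FQ a ((2:ℂ)⁻¹ • y) = 4⁻¹ * FQ a y := by
  have h : a ((2:ℂ)⁻¹ • y) ((2:ℂ)⁻¹ • y) = (4:ℂ)⁻¹ * a y y := by
    rw [map_smul a ((2:ℂ)⁻¹) y, LinearMap.smul_apply,
      LinearMap.map_smulₛₗ (a y) ((2:ℂ)⁻¹) y]
    simp [smul_eq_mul, map_inv₀, Complex.conj_ofNat]
    ring
  have := congrArg Complex.re h
  simpa [FQ, Complex.mul_re] using this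

/-- midpoint identity: a[x-u] + a[x-v] = 2 a[x - (u+v)/2] + (1/2) a[u-v] -/
lemma FQ_midpoint' (x u v : X) :
    FQ a (x - u) + FQ a (x - v)
      = 2 * FQ a (x - (2:ℂ)⁻¹ • (u + v)) + 2⁻¹ * FQ a (u - v) := by
  have h := FQ_parallelogram' a (x - (2:ℂ)⁻¹ • (u + v)) ((2:ℂ)⁻¹ • (u - v))
  have e1 : x - (2:ℂ)⁻¹ • (u + v) + (2:ℂ)⁻¹ • (u - v) = x - v := by
    match_scalars <;> ring
  have e2 : x - (2:ℂ)⁻¹ • (u + v) - (2:ℂ)⁻¹ • (u - v) = x - u := by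
    match_scalars <;> ring
  rw [e1, e2, FQ_half'] at h
  linarith

/-- version centered at zero: a[u] + a[v] = 2 a[(u+v)/2] + (1/2) a[u-v] -/
lemma FQ_neg' (y : X) : FQ a (-y) = FQ a y := by
  have h : a (-y) (-y) = a y y := by simp
  simp [FQ, h]

lemma FQ_midpoint0' (u v : X) :
    FQ a u + FQ a v = 2 * FQ a ((2:ℂ)⁻¹ • (u + v)) + 2⁻¹ * FQ a (u - v) := by
  have h := FQ_midpoint' a 0 u v
  have e1 : (0:X) - u = -u := by abel
  have e2 : (0:X) - v = -v := by abel
  have e3 : (0:X) - (2:ℂ)⁻¹ • (u + v) = -((2:ℂ)⁻¹ • (u + v)) := by abel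
  rw [e1, e2, e3, FQ_neg', FQ_neg', FQ_neg'] at h
  linarith

end auxlem

theorem join_of_quasi_units
    {X : Type*} [AddCommGroup X] [Module ℂ X]
    (w s t p : X →ₗ[ℂ] X →ₗ⋆[ℂ] ℂ)
    (hw : IsNNForm w) (hs : IsNNForm s) (ht : IsNNForm t) (hp : IsNNForm p)
    (hsq : ∀ x : X, FQ s x = ⨆ n : ℕ, ⨅ y : X, (FQ w (x - y) + (n : ℝ) * FQ s y))
    (htq : ∀ x : X, FQ t x = ⨆ n : ℕ, ⨅ y : X, (FQ w (x - y) + (n : ℝ) * FQ t y))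
    (hpd : ∀ x : X, FQ p x = ⨆ n : ℕ, ⨅ y : X, (FQ w (x - y) + (n : ℝ) * (FQ s y + FQ t y))) :
    (IsNNForm p ∧ ∀ x : X, FQ p x = ⨆ n : ℕ, ⨅ y : X, (FQ w (x - y) + (n : ℝ) * FQ p y)) ∧
    FLe s p ∧ FLe t p ∧
    ∀ u : X →ₗ[ℂ] X →ₗ⋆[ℂ] ℂ,
      (IsNNForm u ∧ ∀ x : X, FQ u x = ⨆ n : ℕ, ⨅ y : X, (FQ w (x - y) + (n : ℝ) * FQ u y)) →
      FLe s u → FLe t u → FLe p u := by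

  have hXne : Nonempty X := ⟨0⟩
  have hW0 : ∀ z : X, 0 ≤ FQ w z := FQ_nonneg' w hw
  have hs0 : ∀ z : X, 0 ≤ FQ s z := FQ_nonneg' s hs
  have ht0 : ∀ z : X, 0 ≤ FQ t z := FQ_nonneg' t ht
  have hP0 : ∀ z : X, 0 ≤ FQ p z := FQ_nonneg' p hp
  have hQ0 : ∀ z : X, 0 ≤ FQ s z + FQ t z := fun z => add_nonneg (hs0 z) (ht0 z)
  -- generic bddBelow helper
  have hbb : ∀ f : X → ℝ, (∀ y, 0 ≤ f y) → BddBelow (Set.range f) := by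
    intro f hf
    exact ⟨0, by rintro r ⟨y, rfl⟩; exact hf y⟩
  -- s ≤ p
  have hsple : FLe s p := by
    intro x
    rw [hsq x, hpd x]
    apply ciSup_mono
    · refine ⟨FQ w x, ?_⟩
      rintro r ⟨n, rfl⟩
      refine (ciInf_le (hbb _ fun y =>
        add_nonneg (hW0 _) (mul_nonneg n.cast_nonneg (hQ0 y))) 0).trans ?_
      simp [FQ_zero']
    · intro n
      refine ciInf_mono (hbb _ fun y =>
        add_nonneg (hW0 _) (mul_nonneg n.cast_nonneg (hs0 y))) ?_
      intro y
      have h1 := ht0 y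
      have h2 : (0:ℝ) ≤ (n:ℝ) := n.cast_nonneg
      nlinarith
  have htple : FLe t p := by
    intro x
    rw [htq x, hpd x]
    apply ciSup_mono
    · refine ⟨FQ w x, ?_⟩
      rintro r ⟨n, rfl⟩
      refine (ciInf_le (hbb _ fun y =>
        add_nonneg (hW0 _) (mul_nonneg n.cast_nonneg (hQ0 y))) 0).trans ?_
      simp [FQ_zero']
    · intro n
      refine ciInf_mono (hbb _ fun y =>
        add_nonneg (hW0 _) (mul_nonneg n.cast_nonneg (ht0 y))) ?_
      intro y
      have h1 := hs0 y
      have h2 : (0:ℝ) ≤ (n:ℝ) := n.cast_nonneg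
      nlinarith
  -- quasi-unit property of p
  have hqu : ∀ x : X, FQ p x = ⨆ n : ℕ, ⨅ y : X, (FQ w (x - y) + (n : ℝ) * FQ p y) := by
    intro x
    have hbbQ : ∀ N : ℕ, BddBelow (Set.range fun y : X =>
        FQ w (x - y) + (N:ℝ) * (FQ s y + FQ t y)) :=
      fun N => hbb _ fun y => add_nonneg (hW0 _) (mul_nonneg N.cast_nonneg (hQ0 y))
    have hbbP : ∀ n : ℕ, BddBelow (Set.range fun y : X =>
        FQ w (x - y) + (n:ℝ) * FQ p y) :=
      fun n => hbb _ fun y => add_nonneg (hW0 _) (mul_nonneg n.cast_nonneg (hP0 y))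
    have hbaP : BddAbove (Set.range fun n : ℕ =>
        ⨅ y : X, (FQ w (x - y) + (n:ℝ) * FQ p y)) := by
      refine ⟨FQ w x, ?_⟩
      rintro r ⟨n, rfl⟩
      refine (ciInf_le (hbbP n) 0).trans ?_
      simp [FQ_zero']
    have hbaQ : BddAbove (Set.range fun N : ℕ =>
        ⨅ y : X, (FQ w (x - y) + (N:ℝ) * (FQ s y + FQ t y))) := by
      refine ⟨FQ w x, ?_⟩
      rintro r ⟨N, rfl⟩
      refine (ciInf_le (hbbQ N) 0).trans ?_
      simp [FQ_zero']
    apply le_antisymm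
    · -- p ≤ D_p w
      rw [hpd x]
      apply ciSup_le
      intro N
      have step : (⨅ y : X, (FQ w (x - y) + (N:ℝ) * (FQ s y + FQ t y)))
          ≤ ⨅ y : X, (FQ w (x - y) + ((2*N : ℕ):ℝ) * FQ p y) := by
        refine ciInf_mono (hbbQ N) ?_
        intro y
        have h1 := hsple y
        have h2 := htple y
        have h3 : (0:ℝ) ≤ (N:ℝ) := N.cast_nonneg
        push_cast
        nlinarith
      exact step.trans (le_ciSup hbaP (2*N))
    · -- D_p w ≤ p
      apply ciSup_le
      intro n
      refine le_of_forall_pos_le_add ?_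
      intro ε hε
      set δ : ℝ := ε / (9*(n:ℝ)+1) with hδdef
      have hδ : 0 < δ := by positivity
      have hδε : (9*(n:ℝ)+1) * δ = ε := by
        rw [hδdef]; field_simp
      -- choose N₀
      have hlt : FQ p x - δ < ⨆ N : ℕ, ⨅ y : X,
          (FQ w (x - y) + (N:ℝ) * (FQ s y + FQ t y)) := by
        rw [← hpd x]; linarith
      obtain ⟨N₀, hN₀⟩ := exists_lt_of_lt_ciSup hlt
      have hVN₀le : (⨅ y : X, (FQ w (x - y) + (N₀:ℝ) * (FQ s y + FQ t y))) ≤ FQ p x := by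
        rw [hpd x]; exact le_ciSup hbaQ N₀
      -- choose u' : approximate minimizer at level N₀
      have hlt2 : (⨅ y : X, (FQ w (x - y) + (N₀:ℝ) * (FQ s y + FQ t y)))
          < (⨅ y : X, (FQ w (x - y) + (N₀:ℝ) * (FQ s y + FQ t y))) + δ := by linarith
      obtain ⟨u', hu'⟩ := exists_lt_of_ciInf_lt hlt2
      have hu'Px : FQ w (x - u') + (N₀:ℝ) * (FQ s u' + FQ t u') < FQ p x + δ := by
        linarith
      -- key claim : FQ p u' ≤ 9 δ
      have hPu : FQ p u' ≤ 9 * δ := by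
        rw [hpd u']
        apply ciSup_le
        intro m
        set K : ℕ := ⌈(FQ p x + δ)/δ⌉₊ + 1 with hKdef
        have hK0 : (0:ℝ) < (K:ℝ) := by
          have : 0 < K := Nat.succ_pos _
          exact_mod_cast this
        have hKbig : FQ p x + δ ≤ (K:ℝ) * δ := by
          have h1 : (FQ p x + δ)/δ ≤ ((⌈(FQ p x + δ)/δ⌉₊ : ℕ):ℝ) := Nat.le_ceil _
          have h2 : ((⌈(FQ p x + δ)/δ⌉₊ : ℕ):ℝ) ≤ (K:ℝ) := by
            rw [hKdef]; push_cast; linarith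
          have h3 : (FQ p x + δ)/δ * δ ≤ (K:ℝ) * δ := by
            have := h1.trans h2
            exact mul_le_mul_of_nonneg_right this hδ.le
          rwa [div_mul_cancel₀ _ (ne_of_gt hδ)] at h3
        set M : ℕ := N₀ + m*K with hMdef
        have hMN₀ : N₀ ≤ M := Nat.le_add_right _ _
        -- choose v at level M
        have hlt3 : (⨅ y : X, (FQ w (x - y) + (M:ℝ) * (FQ s y + FQ t y)))
            < (⨅ y : X, (FQ w (x - y) + (M:ℝ) * (FQ s y + FQ t y))) + δ := by linarith
        obtain ⟨v, hv⟩ := exists_lt_of_ciInf_lt hlt3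
        have hVMle : (⨅ y : X, (FQ w (x - y) + (M:ℝ) * (FQ s y + FQ t y))) ≤ FQ p x := by
          rw [hpd x]; exact le_ciSup hbaQ M
        have hvPx : FQ w (x - v) + (M:ℝ) * (FQ s v + FQ t v) < FQ p x + δ := by linarith
        -- Q v is small relative to m
        have hmQv : (m:ℝ) * (FQ s v + FQ t v) ≤ δ := by
          have hMQ : (M:ℝ) * (FQ s v + FQ t v) ≤ FQ p x + δ := by
            have := hW0 (x - v); linarith
          have hmKM : ((m:ℝ) * (K:ℝ)) ≤ (M:ℝ) := by
            exact_mod_cast Nat.le_add_left (m*K) N₀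
          have hQv := hQ0 v
          have hmul := mul_le_mul_of_nonneg_right hmKM hQv
          have step : ((m:ℝ) * (FQ s v + FQ t v)) * (K:ℝ) ≤ δ * (K:ℝ) := by
            nlinarith [hmul, hMQ, hKbig]
          exact le_of_mul_le_mul_right step hK0
        -- parallelogram: w[u'-v] ≤ 8δ
        have hWuv : FQ w (u' - v) ≤ 8 * δ := by
          have hφv : FQ w (x - v) + (N₀:ℝ) * (FQ s v + FQ t v) ≤ FQ p x + δ := by
            have hle : (N₀:ℝ) ≤ (M:ℝ) := by exact_mod_cast hMN₀
            have hmul := mul_le_mul_of_nonneg_right hle (hQ0 v)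
            linarith
          have hz : (⨅ y : X, (FQ w (x - y) + (N₀:ℝ) * (FQ s y + FQ t y)))
              ≤ FQ w (x - (2:ℂ)⁻¹ • (u' + v))
                + (N₀:ℝ) * (FQ s ((2:ℂ)⁻¹ • (u' + v)) + FQ t ((2:ℂ)⁻¹ • (u' + v))) :=
            ciInf_le (hbb _ fun y =>
              add_nonneg (hW0 _) (mul_nonneg N₀.cast_nonneg (hQ0 y))) _
          have hwid := FQ_midpoint' w x u' v
          have hsid := FQ_midpoint0' s u' v
          have htid := FQ_midpoint0' t u' v
          have hN₀0 : (0:ℝ) ≤ (N₀:ℝ) := N₀.cast_nonneg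
          have hQsum : FQ s u' + FQ t u' + (FQ s v + FQ t v)
              = 2 * (FQ s ((2:ℂ)⁻¹ • (u' + v)) + FQ t ((2:ℂ)⁻¹ • (u' + v)))
                + 2⁻¹ * (FQ s (u' - v) + FQ t (u' - v)) := by linarith
          have hQmul : (N₀:ℝ) * (FQ s u' + FQ t u') + (N₀:ℝ) * (FQ s v + FQ t v)
              = 2 * ((N₀:ℝ) * (FQ s ((2:ℂ)⁻¹ • (u' + v)) + FQ t ((2:ℂ)⁻¹ • (u' + v))))
                + 2⁻¹ * ((N₀:ℝ) * (FQ s (u' - v) + FQ t (u' - v))) := by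
            linear_combination (N₀:ℝ) * hQsum
          have hprod : 0 ≤ (N₀:ℝ) * (FQ s (u' - v) + FQ t (u' - v)) :=
            mul_nonneg hN₀0 (hQ0 (u' - v))
          linarith [hwid, hQmul, hz, hprod, hφv, hu'Px, hN₀]
        -- conclude for this m
        have : (⨅ z : X, (FQ w (u' - z) + (m:ℝ) * (FQ s z + FQ t z)))
            ≤ FQ w (u' - v) + (m:ℝ) * (FQ s v + FQ t v) :=
          ciInf_le (hbb _ fun z =>
            add_nonneg (hW0 _) (mul_nonneg m.cast_nonneg (hQ0 z))) v
        linarith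
      -- final estimate
      have hfin : (⨅ y : X, (FQ w (x - y) + (n:ℝ) * FQ p y))
          ≤ FQ w (x - u') + (n:ℝ) * FQ p u' := ciInf_le (hbbP n) u'
      have hWxu : FQ w (x - u') ≤ FQ p x + δ := by
        have h1 : (0:ℝ) ≤ (N₀:ℝ) * (FQ s u' + FQ t u') :=
          mul_nonneg N₀.cast_nonneg (hQ0 u')
        linarith
      have hn0 : (0:ℝ) ≤ (n:ℝ) := n.cast_nonneg
      have : (⨅ y : X, (FQ w (x - y) + (n:ℝ) * FQ p y)) ≤ FQ p x + (9*(n:ℝ)+1) * δ := by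
        have h2 : (n:ℝ) * FQ p u' ≤ (n:ℝ) * (9*δ) :=
          mul_le_mul_of_nonneg_left hPu hn0
        have h3 : (n:ℝ) * (9*δ) + δ = (9*(n:ℝ)+1) * δ := by ring
        linarith [hfin, hWxu, h2]
      rw [hδε] at this
      exact this
  refine ⟨⟨hp, hqu⟩, hsple, htple, ?_⟩
  -- least upper bound property
  intro u ⟨hu1, hu2⟩ hsu htu x
  have hu0 : ∀ z : X, 0 ≤ FQ u z := FQ_nonneg' u hu1
  rw [hpd x, hu2 x]
  apply ciSup_le
  intro n
  have hbau : BddAbove (Set.range fun m : ℕ =>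
      ⨅ y : X, (FQ w (x - y) + (m:ℝ) * FQ u y)) := by
    refine ⟨FQ w x, ?_⟩
    rintro r ⟨m, rfl⟩
    refine (ciInf_le (hbb _ fun y =>
      add_nonneg (hW0 _) (mul_nonneg m.cast_nonneg (hu0 y))) 0).trans ?_
    simp [FQ_zero']
  have step : (⨅ y : X, (FQ w (x - y) + (n:ℝ) * (FQ s y + FQ t y)))
      ≤ ⨅ y : X, (FQ w (x - y) + ((2*n : ℕ):ℝ) * FQ u y) := by
    refine ciInf_mono (hbb _ fun y =>
      add_nonneg (hW0 _) (mul_nonneg n.cast_nonneg (hQ0 y))) ?_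
    intro y
    have h1 := hsu y
    have h2 := htu y
    have h3 : (0:ℝ) ≤ (n:ℝ) := n.cast_nonneg
    push_cast
    nlinarith
  exact step.trans (le_ciSup hbau (2*n))
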